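/- Let ħ, m, c be real numbers, let ψ : Fin 4 → ℂ and let v : Fin 4 → Fin 4 → ℂ (where v q b represents the covariant derivative ∇_q ψ^b, so that ∇_q of the conjugate spinor is conj(v q ·)). For i, j ∈ Fin 4 define T_{ij} = i·ħ·c · Σ_{a,ā,b} D_{a ā} ((m_i)^a_b conj(ψ ā) (v j b) + (m_j)^a_b conj(ψ ā) (v i b))/4 − i·ħ·c · Σ_{a,ā,b} D_{a ā} ((m_i)^a_b (ψ b) conj(v j ā) + (m_j)^a_b (ψ b) conj(v i ā))/4 + i·ħ·c · Σ_{a,ā,b,p,q} D_{a ā} (m_p)^a_b η^{pq} ((ψ b) conj(v q ā) − conj(ψ ā) (v q b))/2 · η_{ij} + m·c² · Σ_{a,ā} D_{a ā} conj(ψ ā) (ψ a) · η_{ij}. Then conj(T_{ij}) = T_{ij} for all i, j ∈ Fin 4, i.e. every component of the energy-momentum tensor of the massive spin 1/2 particle is real. Moreover T_{ij} = T_{ji}. -/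
import Mathlib


open Matrix

/-- The Minkowski matrix `η = diag(1, -1, -1, -1)`. -/
noncomputable def minkEta : Matrix (Fin 4) (Fin 4) ℝ :=
  !![1, 0, 0, 0; 0, -1, 0, 0; 0, 0, -1, 0; 0, 0, 0, -1]

/-- The Dirac form `D`, viewed as a complex `4 × 4` matrix. -/
noncomputable def diracD : Matrix (Fin 4) (Fin 4) ℂ :=
  !![0, 0, 1, 0; 0, 0, 0, 1; 1, 0, 0, 0; 0, 1, 0, 0]

/-- The four Dirac matrices `m₀, m₁, m₂, m₃`. -/
noncomputable def diracMat : Fin 4 → Matrix (Fin 4) (Fin 4) ℂ :=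
  ![!![0, 0, 1, 0; 0, 0, 0, 1; 1, 0, 0, 0; 0, 1, 0, 0],
    !![0, 0, 0, 1; 0, 0, 1, 0; 0, -1, 0, 0; -1, 0, 0, 0],
    !![0, 0, 0, -Complex.I; 0, 0, Complex.I, 0; 0, Complex.I, 0, 0; -Complex.I, 0, 0, 0],
    !![0, 0, 1, 0; 0, 0, 0, -1; -1, 0, 0, 0; 0, 1, 0, 0]]

/-- The components, at a point and in a frame where the metric components are `η`, of the
energy-momentum tensor of a massive spin 1/2 particle; `v q b` represents the covariant
derivative `∇_q ψ^b`. -/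
noncomputable def energyMomentum (hbar m c : ℝ) (ψ : Fin 4 → ℂ) (v : Fin 4 → Fin 4 → ℂ)
    (i j : Fin 4) : ℂ :=
  Complex.I * (hbar : ℂ) * (c : ℂ) *
    ∑ a : Fin 4, ∑ abar : Fin 4, ∑ b : Fin 4,
      diracD a abar *
        ((diracMat i a b * (starRingEnd ℂ) (ψ abar) * v j b
          + diracMat j a b * (starRingEnd ℂ) (ψ abar) * v i b) / 4)
  - Complex.I * (hbar : ℂ) * (c : ℂ) *
    ∑ a : Fin 4, ∑ abar : Fin 4, ∑ b : Fin 4,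
      diracD a abar *
        ((diracMat i a b * ψ b * (starRingEnd ℂ) (v j abar)
          + diracMat j a b * ψ b * (starRingEnd ℂ) (v i abar)) / 4)
  + Complex.I * (hbar : ℂ) * (c : ℂ) *
    (∑ a : Fin 4, ∑ abar : Fin 4, ∑ b : Fin 4, ∑ p : Fin 4, ∑ q : Fin 4,
      diracD a abar * diracMat p a b * ((minkEta p q : ℝ) : ℂ) *
        ((ψ b * (starRingEnd ℂ) (v q abar) - (starRingEnd ℂ) (ψ abar) * v q b) / 2)) *
    ((minkEta i j : ℝ) : ℂ)
  + (m : ℂ) * ((c ^ 2 : ℝ) : ℂ) *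
    (∑ a : Fin 4, ∑ abar : Fin 4, diracD a abar * (starRingEnd ℂ) (ψ abar) * ψ a) *
    ((minkEta i j : ℝ) : ℂ)

lemma emhD : ∀ x y : Fin 4, (starRingEnd ℂ) (diracD x y) = diracD y x := by
  intro x y
  fin_cases x <;> fin_cases y <;> simp [diracD, Matrix.vecHead, Matrix.vecTail]

set_option maxHeartbeats 2000000 in
lemma emhDm : ∀ (p x y : Fin 4),
    (starRingEnd ℂ) (∑ a, diracD a x * diracMat p a y) = ∑ a, diracD a y * diracMat p a x := by
  intro p x y
  fin_cases p <;> fin_cases x <;> fin_cases y <;>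
    simp [diracD, diracMat, Fin.sum_univ_four, Matrix.vecHead, Matrix.vecTail]

lemma emhDm' (p x y : Fin 4) :
    (∑ a : Fin 4, (starRingEnd ℂ) (diracD a x) * (starRingEnd ℂ) (diracMat p a y))
      = ∑ a : Fin 4, diracD a y * diracMat p a x := by
  simpa only [map_sum, _root_.map_mul] using emhDm p x y

noncomputable def emK (M : Matrix (Fin 4) (Fin 4) ℂ) (f g : Fin 4 → ℂ) : ℂ :=
  ∑ x : Fin 4, ∑ y : Fin 4, (∑ a : Fin 4, diracD a x * M a y) * f x * g y

lemma expandK (M : Matrix (Fin 4) (Fin 4) ℂ) (f g : Fin 4 → ℂ) :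
    (∑ a : Fin 4, ∑ x : Fin 4, ∑ y : Fin 4, diracD a x * M a y * f x * g y) = emK M f g := by
  unfold emK
  rw [Finset.sum_comm]
  refine Finset.sum_congr rfl fun x _ => ?_
  rw [Finset.sum_comm]
  refine Finset.sum_congr rfl fun y _ => ?_
  rw [Finset.sum_mul, Finset.sum_mul]

lemma conjKm (p : Fin 4) (f g : Fin 4 → ℂ) :
    (starRingEnd ℂ) (emK (diracMat p) f g)
      = emK (diracMat p) (fun x => (starRingEnd ℂ) (g x)) (fun y => (starRingEnd ℂ) (f y)) := by
  unfold emK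
  simp only [map_sum, _root_.map_mul]
  rw [Finset.sum_comm]
  refine Finset.sum_congr rfl fun x _ => Finset.sum_congr rfl fun y _ => ?_
  rw [emhDm' p y x]
  ring

lemma conjK1 (p : Fin 4) (f g : Fin 4 → ℂ) :
    (starRingEnd ℂ) (emK (diracMat p) (fun x => (starRingEnd ℂ) (f x)) g)
      = emK (diracMat p) (fun x => (starRingEnd ℂ) (g x)) f := by
  simp only [conjKm, Complex.conj_conj]

lemma r3 (G : Fin 4 → Fin 4 → Fin 4 → ℂ) :
    (∑ y : Fin 4, ∑ p : Fin 4, ∑ q : Fin 4, G y p q)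
      = ∑ p : Fin 4, ∑ q : Fin 4, ∑ y : Fin 4, G y p q := by
  rw [Finset.sum_comm]
  refine Finset.sum_congr rfl fun p _ => ?_
  rw [Finset.sum_comm]

lemma reorder5 (F : Fin 4 → Fin 4 → Fin 4 → Fin 4 → Fin 4 → ℂ) :
    (∑ a : Fin 4, ∑ x : Fin 4, ∑ y : Fin 4, ∑ p : Fin 4, ∑ q : Fin 4, F a x y p q)
      = ∑ p : Fin 4, ∑ q : Fin 4, ∑ a : Fin 4, ∑ x : Fin 4, ∑ y : Fin 4, F a x y p q :=
  calc (∑ a : Fin 4, ∑ x : Fin 4, ∑ y : Fin 4, ∑ p : Fin 4, ∑ q : Fin 4, F a x y p q)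
      = ∑ a : Fin 4, ∑ x : Fin 4, ∑ p : Fin 4, ∑ q : Fin 4, ∑ y : Fin 4, F a x y p q :=
        Finset.sum_congr rfl fun a _ => Finset.sum_congr rfl fun x _ => r3 _
    _ = ∑ a : Fin 4, ∑ p : Fin 4, ∑ q : Fin 4, ∑ x : Fin 4, ∑ y : Fin 4, F a x y p q :=
        Finset.sum_congr rfl fun a _ => r3 _
    _ = ∑ p : Fin 4, ∑ q : Fin 4, ∑ a : Fin 4, ∑ x : Fin 4, ∑ y : Fin 4, F a x y p q := r3 _

section raw
variable (ψ : Fin 4 → ℂ) (v : Fin 4 → Fin 4 → ℂ) (i j : Fin 4)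

lemma split1 :
    (∑ a : Fin 4, ∑ abar : Fin 4, ∑ b : Fin 4,
      diracD a abar *
        ((diracMat i a b * (starRingEnd ℂ) (ψ abar) * v j b
          + diracMat j a b * (starRingEnd ℂ) (ψ abar) * v i b) / 4))
    = (emK (diracMat i) (fun x => (starRingEnd ℂ) (ψ x)) (v j)
        + emK (diracMat j) (fun x => (starRingEnd ℂ) (ψ x)) (v i)) / 4 := by
  have e : ∀ a x y : Fin 4,
      diracD a x * ((diracMat i a y * (starRingEnd ℂ) (ψ x) * v j y
          + diracMat j a y * (starRingEnd ℂ) (ψ x) * v i y) / 4)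
        = diracD a x * diracMat i a y * (starRingEnd ℂ) (ψ x) * v j y / 4
          + diracD a x * diracMat j a y * (starRingEnd ℂ) (ψ x) * v i y / 4 :=
    fun a x y => by ring
  simp only [e, Finset.sum_add_distrib, ← Finset.sum_div, expandK]
  ring

lemma split2 :
    (∑ a : Fin 4, ∑ abar : Fin 4, ∑ b : Fin 4,
      diracD a abar *
        ((diracMat i a b * ψ b * (starRingEnd ℂ) (v j abar)
          + diracMat j a b * ψ b * (starRingEnd ℂ) (v i abar)) / 4))
    = (emK (diracMat i) (fun x => (starRingEnd ℂ) (v j x)) ψ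
        + emK (diracMat j) (fun x => (starRingEnd ℂ) (v i x)) ψ) / 4 := by
  have e : ∀ a x y : Fin 4,
      diracD a x * ((diracMat i a y * ψ y * (starRingEnd ℂ) (v j x)
          + diracMat j a y * ψ y * (starRingEnd ℂ) (v i x)) / 4)
        = diracD a x * diracMat i a y * (starRingEnd ℂ) (v j x) * ψ y / 4
          + diracD a x * diracMat j a y * (starRingEnd ℂ) (v i x) * ψ y / 4 :=
    fun a x y => by ring
  simp only [e, Finset.sum_add_distrib, ← Finset.sum_div, expandK]
  ring

lemma split3 :
    (∑ a : Fin 4, ∑ abar : Fin 4, ∑ b : Fin 4, ∑ p : Fin 4, ∑ q : Fin 4,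
      diracD a abar * diracMat p a b * ((minkEta p q : ℝ) : ℂ) *
        ((ψ b * (starRingEnd ℂ) (v q abar) - (starRingEnd ℂ) (ψ abar) * v q b) / 2))
    = ∑ p : Fin 4, ∑ q : Fin 4, ((minkEta p q : ℝ) : ℂ) *
        ((emK (diracMat p) (fun x => (starRingEnd ℂ) (v q x)) ψ
          - emK (diracMat p) (fun x => (starRingEnd ℂ) (ψ x)) (v q)) / 2) := by
  rw [reorder5]
  refine Finset.sum_congr rfl fun p _ => Finset.sum_congr rfl fun q _ => ?_
  have e : ∀ a x y : Fin 4,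
      diracD a x * diracMat p a y * ((minkEta p q : ℝ) : ℂ) *
        ((ψ y * (starRingEnd ℂ) (v q x) - (starRingEnd ℂ) (ψ x) * v q y) / 2)
      = (((minkEta p q : ℝ) : ℂ) / 2) *
          (diracD a x * diracMat p a y * (starRingEnd ℂ) (v q x) * ψ y)
        - (((minkEta p q : ℝ) : ℂ) / 2) *
          (diracD a x * diracMat p a y * (starRingEnd ℂ) (ψ x) * v q y) :=
    fun a x y => by ring
  simp only [e, Finset.sum_sub_distrib, ← Finset.mul_sum, expandK]
  ring

lemma L1 :
    (starRingEnd ℂ) (∑ a : Fin 4, ∑ abar : Fin 4, ∑ b : Fin 4,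
      diracD a abar *
        ((diracMat i a b * (starRingEnd ℂ) (ψ abar) * v j b
          + diracMat j a b * (starRingEnd ℂ) (ψ abar) * v i b) / 4))
    = ∑ a : Fin 4, ∑ abar : Fin 4, ∑ b : Fin 4,
      diracD a abar *
        ((diracMat i a b * ψ b * (starRingEnd ℂ) (v j abar)
          + diracMat j a b * ψ b * (starRingEnd ℂ) (v i abar)) / 4) := by
  rw [split1, split2, map_div₀, _root_.map_add, conjK1, conjK1, map_ofNat]

lemma L1' :
    (starRingEnd ℂ) (∑ a : Fin 4, ∑ abar : Fin 4, ∑ b : Fin 4,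
      diracD a abar *
        ((diracMat i a b * ψ b * (starRingEnd ℂ) (v j abar)
          + diracMat j a b * ψ b * (starRingEnd ℂ) (v i abar)) / 4))
    = ∑ a : Fin 4, ∑ abar : Fin 4, ∑ b : Fin 4,
      diracD a abar *
        ((diracMat i a b * (starRingEnd ℂ) (ψ abar) * v j b
          + diracMat j a b * (starRingEnd ℂ) (ψ abar) * v i b) / 4) := by
  rw [← L1 ψ v i j, Complex.conj_conj]

lemma L3 :
    (starRingEnd ℂ) (∑ a : Fin 4, ∑ abar : Fin 4, ∑ b : Fin 4, ∑ p : Fin 4, ∑ q : Fin 4,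
      diracD a abar * diracMat p a b * ((minkEta p q : ℝ) : ℂ) *
        ((ψ b * (starRingEnd ℂ) (v q abar) - (starRingEnd ℂ) (ψ abar) * v q b) / 2))
    = -(∑ a : Fin 4, ∑ abar : Fin 4, ∑ b : Fin 4, ∑ p : Fin 4, ∑ q : Fin 4,
      diracD a abar * diracMat p a b * ((minkEta p q : ℝ) : ℂ) *
        ((ψ b * (starRingEnd ℂ) (v q abar) - (starRingEnd ℂ) (ψ abar) * v q b) / 2)) := by
  rw [split3, map_sum, ← Finset.sum_neg_distrib]
  refine Finset.sum_congr rfl fun p _ => ?_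
  rw [map_sum, ← Finset.sum_neg_distrib]
  refine Finset.sum_congr rfl fun q _ => ?_
  rw [_root_.map_mul, map_div₀, _root_.map_sub, conjK1, conjK1, map_ofNat,
    Complex.conj_ofReal]
  ring

lemma L4 :
    (starRingEnd ℂ) (∑ a : Fin 4, ∑ abar : Fin 4,
        diracD a abar * (starRingEnd ℂ) (ψ abar) * ψ a)
    = ∑ a : Fin 4, ∑ abar : Fin 4, diracD a abar * (starRingEnd ℂ) (ψ abar) * ψ a := by
  simp only [map_sum, _root_.map_mul, Complex.conj_conj, emhD]
  rw [Finset.sum_comm]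
  exact Finset.sum_congr rfl fun a _ => Finset.sum_congr rfl fun x _ => by ring

end raw

lemma emhEta (i j : Fin 4) : ((minkEta i j : ℝ) : ℂ) = ((minkEta j i : ℝ) : ℂ) := by
  fin_cases i <;> fin_cases j <;> simp [minkEta, Matrix.vecHead, Matrix.vecTail]


/-- Every component of the energy-momentum tensor of the massive spin 1/2
particle is real, `conj T_{ij} = T_{ij}`, and the tensor is symmetric, `T_{ij} = T_{ji}`. -/
theorem energy_momentum_tensor_real_and_symmetric
    (hbar m c : ℝ) (ψ : Fin 4 → ℂ) (v : Fin 4 → Fin 4 → ℂ) :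
    ∀ i j : Fin 4,
      (starRingEnd ℂ) (energyMomentum hbar m c ψ v i j) = energyMomentum hbar m c ψ v i j ∧
      energyMomentum hbar m c ψ v i j = energyMomentum hbar m c ψ v j i := by
  intro i j
  constructor
  · unfold energyMomentum
    simp only [_root_.map_add, _root_.map_sub, _root_.map_mul, Complex.conj_I,
      Complex.conj_ofReal]
    rw [L1 ψ v i j, L1' ψ v i j, L3 ψ v, L4 ψ]
    ring
  · unfold energyMomentum
    have h1 : (∑ a : Fin 4, ∑ abar : Fin 4, ∑ b : Fin 4,
        diracD a abar *
          ((diracMat i a b * (starRingEnd ℂ) (ψ abar) * v j b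
            + diracMat j a b * (starRingEnd ℂ) (ψ abar) * v i b) / 4))
        = ∑ a : Fin 4, ∑ abar : Fin 4, ∑ b : Fin 4,
        diracD a abar *
          ((diracMat j a b * (starRingEnd ℂ) (ψ abar) * v i b
            + diracMat i a b * (starRingEnd ℂ) (ψ abar) * v j b) / 4) :=
      Finset.sum_congr rfl fun _ _ => Finset.sum_congr rfl fun _ _ =>
        Finset.sum_congr rfl fun _ _ => by ring
    have h2 : (∑ a : Fin 4, ∑ abar : Fin 4, ∑ b : Fin 4,
        diracD a abar *
          ((diracMat i a b * ψ b * (starRingEnd ℂ) (v j abar)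
            + diracMat j a b * ψ b * (starRingEnd ℂ) (v i abar)) / 4))
        = ∑ a : Fin 4, ∑ abar : Fin 4, ∑ b : Fin 4,
        diracD a abar *
          ((diracMat j a b * ψ b * (starRingEnd ℂ) (v i abar)
            + diracMat i a b * ψ b * (starRingEnd ℂ) (v j abar)) / 4) :=
      Finset.sum_congr rfl fun _ _ => Finset.sum_congr rfl fun _ _ =>
        Finset.sum_congr rfl fun _ _ => by ring
    rw [h1, h2, emhEta i j]
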